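/- Let (A, ρ, [.,.]) be a skew algebroid, Ω a nondegenerate 2-form on A, θ an A-1-form, and (Π, ξ) the associated pair (Π(α,β) = Ω(♯_Ω(α), ♯_Ω(β)), ξ = ♯_Ω(θ)). Then (Ω, θ) is a locally conformally symplectic structure (d_ρΩ + θ∧Ω = 0 and d_ρθ = 0) if and only if (Π, ξ) is a Jacobi structure ([Π,Π] = 2ξ∧Π and L^ρ_ξΠ = 0). Moreover, with α = ♭_Ω(a), β = ♭_Ω(b), γ = ♭_Ω(c), the identities ((1/2)[Π,Π] − ξ∧Π)(α,β,γ) = (d_ρΩ + θ∧Ω)(a,b,c) and L^ρ_ξΠ(α,β) = −L^ρ_ξΩ(a,b) hold. -/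

import Mathlib

/-- Algebraic model of a skew algebroid over a base manifold: `R` plays the role of
the ring of smooth functions, `G` the module of sections of the anchored bundle,
`bracket` the skew-symmetric bracket satisfying the Leibniz rule, and `anchor`
gives the action of sections on functions by derivations. -/
structure SkewAlgebroid (R : Type*) [CommRing R] (G : Type*)
    [AddCommGroup G] [Module R G] where
  bracket : G → G → G
  anchor : G → R → R
  bracket_add_left : ∀ a b c, bracket (a + b) c = bracket a c + bracket b c
  bracket_skew : ∀ a b, bracket a b = - bracket b a
  anchor_add : ∀ a b φ, anchor (a + b) φ = anchor a φ + anchor b φ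
  anchor_smul : ∀ (φ : R) a ψ, anchor (φ • a) ψ = φ * anchor a ψ
  anchor_map_add : ∀ a φ ψ, anchor a (φ + ψ) = anchor a φ + anchor a ψ
  anchor_map_mul : ∀ a φ ψ, anchor a (φ * ψ) = φ * anchor a ψ + ψ * anchor a φ
  leibniz : ∀ a (φ : R) b, bracket a (φ • b) = φ • bracket a b + anchor a φ • b

namespace SkewAlgebroid

variable {R : Type*} [CommRing R] {G : Type*} [AddCommGroup G] [Module R G]

/-- The bivector field associated to a sharp map `♯ : A* → A`: `Π(α,β) = β(♯α)`. -/
def biv (sharp : (G →ₗ[R] R) → G) (α β : G →ₗ[R] R) : R := β (sharp α)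

/-- `♯_{Π,ξ}(α) = ♯_Π(α) + α(ξ)ξ`. -/
def sharpJ (sharp : (G →ₗ[R] R) → G) (ξ : G) (α : G →ₗ[R] R) : G := sharp α + α ξ • ξ

/-- `(ξ ∧ Π)(α,β,γ)`. -/
def wedgeVB (ξ : G) (sharp : (G →ₗ[R] R) → G) (α β γ : G →ₗ[R] R) : R :=
  α ξ * biv sharp β γ - β ξ * biv sharp α γ + γ ξ * biv sharp α β

variable (S : SkewAlgebroid R G)

lemma bracket_add_right (a b c : G) :
    S.bracket a (b + c) = S.bracket a b + S.bracket a c := by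
  rw [S.bracket_skew a (b + c), S.bracket_add_left, S.bracket_skew b a, S.bracket_skew c a]
  abel

/-- The Lie `A`-derivative of a 1-form along a section. -/
def lieDeriv (a : G) (α : G →ₗ[R] R) : G →ₗ[R] R where
  toFun b := S.anchor a (α b) - α (S.bracket a b)
  map_add' b c := by
    (try dsimp only)
    rw [map_add, S.anchor_map_add, S.bracket_add_right, map_add]; ring
  map_smul' φ b := by
    (try dsimp only)
    rw [map_smul, smul_eq_mul, S.anchor_map_mul, S.leibniz, map_add, map_smul, map_smul,
      smul_eq_mul, smul_eq_mul, RingHom.id_apply, smul_eq_mul]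
    ring

/-- The exterior `A`-differential of a function, as a 1-form. -/
def dform (φ : R) : G →ₗ[R] R where
  toFun a := S.anchor a φ
  map_add' a b := S.anchor_add a b φ
  map_smul' c a := by (try dsimp only); rw [S.anchor_smul]; rfl

/-- The exterior `A`-differential of a 1-form. -/
def dOne (η : G →ₗ[R] R) (a b : G) : R :=
  S.anchor a (η b) - S.anchor b (η a) - η (S.bracket a b)

/-- The exterior `A`-differential of a 2-form. -/
def dTwo (Ω : G →ₗ[R] G →ₗ[R] R) (a b c : G) : R :=
  S.anchor a (Ω b c) - S.anchor b (Ω a c) + S.anchor c (Ω a b)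
    - Ω (S.bracket a b) c + Ω (S.bracket a c) b - Ω (S.bracket b c) a

/-- The Lie `A`-derivative of a 2-form along a section. -/
def lieTwo (ξ : G) (Ω : G →ₗ[R] G →ₗ[R] R) (a b : G) : R :=
  S.anchor ξ (Ω a b) - Ω (S.bracket ξ a) b - Ω a (S.bracket ξ b)

/-- The Koszul bracket of 1-forms associated with the bivector field given by `sharp`:
`[α,β]_Π = L_{♯α}β − L_{♯β}α − d_ρ(Π(α,β))`. -/
def koszul (sharp : (G →ₗ[R] R) → G) (α β : G →ₗ[R] R) : G →ₗ[R] R :=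
  S.lieDeriv (sharp α) β - S.lieDeriv (sharp β) α - S.dform (biv sharp α β)

/-- The Schouten–Nijenhuis bracket `[Π,Π]`, defined (as in the contravariant calculus)
by `[Π,Π] = −d_{ρ_Π}Π` via the structure `(ρ_Π, [.,.]_Π)` on the dual. -/
def schouten (sharp : (G →ₗ[R] R) → G) (α β γ : G →ₗ[R] R) : R :=
  -(S.anchor (sharp α) (biv sharp β γ) - S.anchor (sharp β) (biv sharp α γ)
      + S.anchor (sharp γ) (biv sharp α β)
      - biv sharp (S.koszul sharp α β) γ + biv sharp (S.koszul sharp α γ) β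
      - biv sharp (S.koszul sharp β γ) α)

/-- The Lie `A`-derivative `L^ρ_ξ Π` of the bivector field. -/
def lieBiv (ξ : G) (sharp : (G →ₗ[R] R) → G) (α β : G →ₗ[R] R) : R :=
  S.anchor ξ (biv sharp α β) - biv sharp (S.lieDeriv ξ α) β - biv sharp α (S.lieDeriv ξ β)

/-- The deformed dual bracket `[α,β]^λ_{Π,ξ}`. -/
def bracketJ (sharp : (G →ₗ[R] R) → G) (ξ : G) (lam : G →ₗ[R] R) (α β : G →ₗ[R] R) :
    G →ₗ[R] R :=
  S.koszul sharp α β + α ξ • (S.lieDeriv ξ β - β) - β ξ • (S.lieDeriv ξ α - α)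
    - biv sharp α β • lam

/-- The anchor is a bracket morphism (almost Lie algebroid condition). -/
def IsAlmostLie : Prop := ∀ a b φ,
  S.anchor (S.bracket a b) φ = S.anchor a (S.anchor b φ) - S.anchor b (S.anchor a φ)

/-- The Jacobi identity for the bracket (Lie algebroid condition). -/
def IsJacobi : Prop := ∀ a b c,
  S.bracket (S.bracket a b) c + S.bracket (S.bracket b c) a + S.bracket (S.bracket c a) b = 0

end SkewAlgebroid

/-! Under `♭ = e` the bivector is `Π(♭a, ♭b) = Ω(a, b)` and the Koszul bracket is
`[♭a, ♭b]_Π = ♭[a, b] - i_b i_a d_ρΩ`; substituted into the contravariant formula for `[Π, Π]`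
this gives `[Π, Π](♭a, ♭b, ♭c) = 2 d_ρΩ(a, b, c)`, while `ξ ∧ Π` pulls back to `-θ ∧ Ω` and
`L_ξΠ` to `-L_ξΩ`. Once `d_ρΩ + θ ∧ Ω = 0`, Cartan's formula turns `L_ξΩ` into `-d_ρθ`, so the
second halves of the two structures correspond as well. -/

namespace SkewAlgebroid

section TwoIsInvertible

variable {R : Type*} [Ring R] [Algebra ℝ R]

lemma isUnit_two_of_algebra_real : IsUnit (2 : R) := by
  simpa only [map_ofNat] using (IsUnit.mk0 (2 : ℝ) two_ne_zero).map (algebraMap ℝ R)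

lemma half_smul_two_mul (x : R) : (1 / 2 : ℝ) • (2 * x) = x := by
  rw [two_mul, ← two_smul ℝ x, smul_smul]
  norm_num

end TwoIsInvertible

variable {R : Type*} [CommRing R] {G : Type*} [AddCommGroup G] [Module R G]

/-- `(θ ∧ Ω)(a, b, c)`. -/
def wedgeOneTwo (θ : G →ₗ[R] R) (Ω : G →ₗ[R] G →ₗ[R] R) (a b c : G) : R :=
  θ a * Ω b c - θ b * Ω a c + θ c * Ω a b

variable (S : SkewAlgebroid R G)

lemma anchor_zero (a : G) : S.anchor a 0 = 0 := by
  have h := S.anchor_map_add a 0 0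
  rwa [add_zero, left_eq_add] at h

lemma anchor_neg (a : G) (φ : R) : S.anchor a (-φ) = -S.anchor a φ := by
  rw [eq_neg_iff_add_eq_zero, ← S.anchor_map_add, neg_add_cancel, anchor_zero]

lemma lieDeriv_apply (a : G) (α : G →ₗ[R] R) (b : G) :
    S.lieDeriv a α b = S.anchor a (α b) - α (S.bracket a b) := rfl

lemma dform_apply (φ : R) (a : G) : S.dform φ a = S.anchor a φ := rfl

section SkewForm

variable {Ω : G →ₗ[R] G →ₗ[R] R}

lemma dTwo_swap (hΩ : ∀ a b, Ω a b = -Ω b a) (a b c : G) :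
    S.dTwo Ω a c b = -S.dTwo Ω a b c := by
  simp only [dTwo]
  rw [hΩ c b, S.bracket_skew c b]
  simp only [map_neg, LinearMap.neg_apply, anchor_neg]
  ring

lemma dTwo_rotate (hΩ : ∀ a b, Ω a b = -Ω b a) (a b c : G) :
    S.dTwo Ω b c a = S.dTwo Ω a b c := by
  simp only [dTwo]
  rw [hΩ c a, hΩ b a, S.bracket_skew b a, S.bracket_skew c a]
  simp only [map_neg, LinearMap.neg_apply, anchor_neg]
  ring

/-- Cartan's formula `L_ξ Ω = i_ξ d_ρΩ + d_ρ(i_ξ Ω)`. -/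
lemma lieTwo_eq_dTwo_add_dOne (hΩ : ∀ a b, Ω a b = -Ω b a) (ξ a b : G) :
    S.lieTwo ξ Ω a b = S.dTwo Ω ξ a b + S.dOne (Ω ξ) a b := by
  simp only [lieTwo, dTwo, dOne]
  rw [hΩ (S.bracket ξ b) a, hΩ (S.bracket a b) ξ]
  ring

end SkewForm

section Flat

variable {Ω : G →ₗ[R] G →ₗ[R] R} {e : G ≃ₗ[R] (G →ₗ[R] R)}

lemma flat_apply_sharp (hΩ : ∀ a b, Ω a b = -Ω b a) (he : ∀ a b, e a b = -Ω a b)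
    (μ : G →ₗ[R] R) (c : G) : e c (e.symm μ) = -μ c := by
  conv_rhs => rw [← e.apply_symm_apply μ]
  rw [he, he, hΩ]

lemma biv_flat_flat (hΩ : ∀ a b, Ω a b = -Ω b a) (he : ∀ a b, e a b = -Ω a b) (a b : G) :
    biv (fun μ => e.symm μ) (e a) (e b) = Ω a b := by
  rw [biv, e.symm_apply_apply, he, neg_eq_iff_eq_neg, hΩ]

lemma biv_flat_right (hΩ : ∀ a b, Ω a b = -Ω b a) (he : ∀ a b, e a b = -Ω a b)
    (μ : G →ₗ[R] R) (c : G) : biv (fun μ => e.symm μ) μ (e c) = -μ c :=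
  flat_apply_sharp hΩ he μ c

lemma koszul_flat_flat_apply (hΩ : ∀ a b, Ω a b = -Ω b a) (he : ∀ a b, e a b = -Ω a b)
    (a b c : G) :
    S.koszul (fun μ => e.symm μ) (e a) (e b) c = e (S.bracket a b) c - S.dTwo Ω a b c := by
  simp only [koszul, LinearMap.sub_apply, lieDeriv_apply, dform_apply, biv_flat_flat hΩ he,
    e.symm_apply_apply, he, dTwo, anchor_neg]
  rw [hΩ b (S.bracket a c), hΩ a (S.bracket b c)]
  ring

lemma schouten_flat (hΩ : ∀ a b, Ω a b = -Ω b a) (he : ∀ a b, e a b = -Ω a b) (a b c : G) :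
    S.schouten (fun μ => e.symm μ) (e a) (e b) (e c) = 2 * S.dTwo Ω a b c := by
  simp only [schouten, e.symm_apply_apply, biv_flat_flat hΩ he, biv_flat_right hΩ he,
    koszul_flat_flat_apply S hΩ he, he, S.dTwo_swap hΩ a b c, S.dTwo_rotate hΩ a b c]
  simp only [dTwo]
  ring

lemma wedgeVB_flat (hΩ : ∀ a b, Ω a b = -Ω b a) (he : ∀ a b, e a b = -Ω a b)
    (θ : G →ₗ[R] R) (a b c : G) :
    wedgeVB (e.symm θ) (fun μ => e.symm μ) (e a) (e b) (e c) = -wedgeOneTwo θ Ω a b c := by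
  simp only [wedgeVB, biv_flat_flat hΩ he, flat_apply_sharp hΩ he, wedgeOneTwo]
  ring

lemma lieBiv_flat (hΩ : ∀ a b, Ω a b = -Ω b a) (he : ∀ a b, e a b = -Ω a b) (ξ a b : G) :
    S.lieBiv ξ (fun μ => e.symm μ) (e a) (e b) = -S.lieTwo ξ Ω a b := by
  simp only [lieBiv, biv_flat_flat hΩ he, biv_flat_right hΩ he]
  simp only [biv, e.symm_apply_apply, lieDeriv_apply, he, lieTwo, anchor_neg]
  rw [hΩ b a, hΩ b (S.bracket ξ a), anchor_neg]
  ring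

lemma apply_sharp_left (he : ∀ a b, e a b = -Ω a b) (θ : G →ₗ[R] R) (x : G) :
    Ω (e.symm θ) x = -θ x := by
  rw [← e.apply_symm_apply θ, he, neg_neg, e.symm_apply_apply]

lemma apply_sharp_self [Algebra ℝ R] (hΩ : ∀ a b, Ω a b = -Ω b a)
    (he : ∀ a b, e a b = -Ω a b) (θ : G →ₗ[R] R) : θ (e.symm θ) = 0 := by
  have hdiag : 2 * Ω (e.symm θ) (e.symm θ) = 0 := by
    linear_combination hΩ (e.symm θ) (e.symm θ)
  rw [isUnit_two_of_algebra_real.mul_right_eq_zero, apply_sharp_left he] at hdiag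
  exact neg_eq_zero.mp hdiag

/-- Contracting `d_ρΩ + θ ∧ Ω = 0` with `ξ = ♯θ` gives `i_ξ d_ρΩ = 0`, because
`i_ξ(θ ∧ Ω) = θ(ξ) Ω - θ ∧ i_ξΩ = 0 + θ ∧ θ`; Cartan's formula then leaves `L_ξΩ = -d_ρθ`. -/
lemma lieTwo_sharp_eq_neg_dOne [Algebra ℝ R] (hΩ : ∀ a b, Ω a b = -Ω b a)
    (he : ∀ a b, e a b = -Ω a b) {θ : G →ₗ[R] R}
    (hlcs : ∀ a b c, S.dTwo Ω a b c + wedgeOneTwo θ Ω a b c = 0) (a b : G) :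
    S.lieTwo (e.symm θ) Ω a b = -S.dOne θ a b := by
  have hcontract : S.dTwo Ω (e.symm θ) a b = 0 := by
    have h := hlcs (e.symm θ) a b
    rw [wedgeOneTwo, apply_sharp_self hΩ he, apply_sharp_left he, apply_sharp_left he] at h
    linear_combination h
  rw [S.lieTwo_eq_dTwo_add_dOne hΩ, hcontract]
  simp only [dOne, apply_sharp_left he, anchor_neg]
  ring

end Flat

end SkewAlgebroid

open SkewAlgebroid

variable {R : Type*} [CommRing R] {G : Type*} [AddCommGroup G] [Module R G]

/-- for a nondegenerate 2-form `Ω` and a 1-form `θ`, with associated pair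
`Π(α,β) = Ω(♯_Ωα,♯_Ωβ)` (sharp map `♯_Π = ♯_Ω = e.symm`) and `ξ = ♯_Ω(θ)`:
`(Ω,θ)` is locally conformally symplectic iff `(Π,ξ)` is a Jacobi structure; moreover
`((1/2)[Π,Π] − ξ∧Π)(♭a,♭b,♭c) = (d_ρΩ + θ∧Ω)(a,b,c)` and `L_ξΠ(♭a,♭b) = −L_ξΩ(a,b)`. -/
theorem lcs_iff_jacobi [Algebra ℝ R]
    (S : SkewAlgebroid R G) (Ω : G →ₗ[R] G →ₗ[R] R)
    (hΩskew : ∀ a b : G, Ω a b = - Ω b a)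
    (e : G ≃ₗ[R] (G →ₗ[R] R)) (he : ∀ a b : G, e a b = -(Ω a b))
    (θ : G →ₗ[R] R) :
    (∀ a b c : G,
        (1/2 : ℝ) • S.schouten (fun μ => e.symm μ) (e a) (e b) (e c)
            - wedgeVB (e.symm θ) (fun μ => e.symm μ) (e a) (e b) (e c)
          = S.dTwo Ω a b c + (θ a * Ω b c - θ b * Ω a c + θ c * Ω a b))
    ∧ (∀ a b : G,
        S.lieBiv (e.symm θ) (fun μ => e.symm μ) (e a) (e b)
          = - S.lieTwo (e.symm θ) Ω a b)
    ∧ (((∀ a b c : G, S.dTwo Ω a b c + (θ a * Ω b c - θ b * Ω a c + θ c * Ω a b) = 0)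
          ∧ (∀ a b : G, S.dOne θ a b = 0))
        ↔ ((∀ α β γ : G →ₗ[R] R,
              S.schouten (fun μ => e.symm μ) α β γ
                = 2 * wedgeVB (e.symm θ) (fun μ => e.symm μ) α β γ)
            ∧ (∀ α β : G →ₗ[R] R,
                S.lieBiv (e.symm θ) (fun μ => e.symm μ) α β = 0))) := by
  have hschouten_iff_lcs : ∀ a b c, S.schouten (fun μ => e.symm μ) (e a) (e b) (e c)
      = 2 * wedgeVB (e.symm θ) (fun μ => e.symm μ) (e a) (e b) (e c)
      ↔ S.dTwo Ω a b c + wedgeOneTwo θ Ω a b c = 0 := fun a b c => by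
    rw [schouten_flat S hΩskew he, wedgeVB_flat hΩskew he,
      isUnit_two_of_algebra_real.mul_right_inj, ← sub_eq_zero, sub_neg_eq_add]
  refine ⟨fun a b c => ?_, lieBiv_flat S hΩskew he _, ?_⟩
  · rw [schouten_flat S hΩskew he, wedgeVB_flat hΩskew he, half_smul_two_mul, sub_neg_eq_add]
    rfl
  rw [e.surjective.forall₃, e.surjective.forall₂]
  simp only [hschouten_iff_lcs, lieBiv_flat S hΩskew he, neg_eq_zero]
  constructor
  · rintro ⟨hlcs, hclosed⟩
    exact ⟨hlcs, fun a b => by rw [S.lieTwo_sharp_eq_neg_dOne hΩskew he hlcs, hclosed, neg_zero]⟩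
  · rintro ⟨hlcs, hlie⟩
    refine ⟨hlcs, fun a b => ?_⟩
    rw [← neg_eq_zero, ← S.lieTwo_sharp_eq_neg_dOne hΩskew he hlcs, hlie]
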